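/- Verification of the quantum Price relation for the quadratic-exponential moment: let g(μ,Σ) = exp(−(1/2)μᵀΨμ)/√(det(Iₙ + ΣΠ)) with Ψ = (Π⁻¹ + Σ)⁻¹, for Π, Σ positive definite symmetric. Then the Hessian of g with respect to μ equals g·(Ψμμᵀ Ψ − Ψ), and the Fréchet derivative of g with respect to Σ in symmetric direction H equals (1/2)g·⟨Ψμμᵀ Ψ − Ψ, H⟩; hence ∂_μ² g = 2 ∂_Σ g. -/

import Mathlib

/-
Near `Σ` the determinant factors as `det (1 + ΣΠ) = det (Π⁻¹ + Σ) · det Π`, so there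
`g = exp (-(1/2) (μᵀ (Π⁻¹ + Σ)⁻¹ μ + log det (Π⁻¹ + Σ) + log det Π))`. Jacobi's formula
`D log det X [H] = tr (X⁻¹ H)` and the derivative `H ↦ -X⁻¹ H X⁻¹` of inversion then give
`D_Σ g [H] = (1/2) g tr ((Ψμμᵀ Ψ - Ψ) H)`. As a function of `μ`, `g` is the Gaussian
`exp (-(1/2) μᵀ Ψ μ) / c` with `Ψ` symmetric, whose Hessian is `g (Ψμμᵀ Ψ - Ψ)`; pairing it
with a symmetric `H` gives twice the `Σ`-derivative.
-/

open Matrix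

def symMatrices (n : ℕ) : Submodule ℝ (Matrix (Fin n) (Fin n) ℝ) where
  carrier := {A | A.IsSymm}
  add_mem' := fun ha hb => ha.add hb
  zero_mem' := Matrix.isSymm_zero
  smul_mem' := fun c _ hA => hA.smul c

lemma Matrix.PosDef.mem_symMatrices {n : ℕ} {S : Matrix (Fin n) (Fin n) ℝ}
    (h : S.PosDef) : S ∈ symMatrices n := by
  have hh := h.isHermitian
  rw [Matrix.IsHermitian, Matrix.conjTranspose_eq_transpose_of_trivial] at hh
  exact hh

attribute [local instance] Matrix.normedAddCommGroup Matrix.normedSpace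
noncomputable def hessianMatrix {n : ℕ} (f : (Fin n → ℝ) → ℝ) (x : Fin n → ℝ) :
    Matrix (Fin n) (Fin n) ℝ :=
  Matrix.of fun i j => fderiv ℝ (fun y => fderiv ℝ f y (Pi.single j 1)) x (Pi.single i 1)

/-- The closed-form quadratic-exponential moment
`g(μ,Σ) = exp(-(1/2)μᵀΨμ)/sqrt(det(I + ΣΠ))`, `Ψ = (Π⁻¹+Σ)⁻¹`. -/
noncomputable def gQE {n : ℕ} (P : Matrix (Fin n) (Fin n) ℝ) (μ : Fin n → ℝ)
    (A : Matrix (Fin n) (Fin n) ℝ) : ℝ :=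
  Real.exp (-(1 / 2 : ℝ) * (μ ⬝ᵥ ((P⁻¹ + A)⁻¹ *ᵥ μ))) / Real.sqrt ((1 + A * P).det)

open Filter Topology

theorem RingEquiv.map_ringInverse {R S : Type*} [Semiring R] [Semiring S] (φ : R ≃+* S) (a : R) :
    φ (Ring.inverse a) = Ring.inverse (φ a) := by
  by_cases ha : IsUnit a
  · obtain ⟨u, rfl⟩ := ha
    rw [Ring.inverse_unit, show φ u = (Units.map (φ : R →* S) u : S) from rfl, Ring.inverse_unit]
    rfl
  · rw [Ring.inverse_non_unit a ha, Ring.inverse_non_unit _ (by simpa using ha), map_zero]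

theorem Matrix.PosDef.isSymm {ι : Type*} {A : Matrix ι ι ℝ} (hA : A.PosDef) : A.IsSymm :=
  isHermitian_iff_isSymm.mp hA.isHermitian

section symmetric
variable {ι : Type*} [Fintype ι]

theorem Matrix.IsSymm.mulVec_dotProduct {Ψ : Matrix ι ι ℝ} (hΨ : Ψ.IsSymm) (x y : ι → ℝ) :
    (Ψ *ᵥ x) ⬝ᵥ y = x ⬝ᵥ (Ψ *ᵥ y) := by
  rw [dotProduct_mulVec, ← mulVec_transpose, hΨ.eq]

theorem Matrix.IsSymm.trace_mul_eq_sum {H : Matrix ι ι ℝ} (hH : H.IsSymm) (K : Matrix ι ι ℝ) :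
    (K * H).trace = ∑ i, ∑ j, H i j * K i j := by
  simp only [trace, diag, mul_apply, hH.apply, mul_comm]

theorem Matrix.trace_vecMulVec_mul (u w : ι → ℝ) (H : Matrix ι ι ℝ) :
    (vecMulVec u w * H).trace = w ⬝ᵥ (H *ᵥ u) := by
  rw [trace_mul_comm, mul_vecMulVec, trace_vecMulVec, dotProduct_comm]

end symmetric

section matrixCalculus
variable {ι : Type*} [Fintype ι] [DecidableEq ι]

noncomputable def Matrix.traceMulCLM (B : Matrix ι ι ℝ) : Matrix ι ι ℝ →L[ℝ] ℝ :=
  LinearMap.toContinuousLinearMap (traceLinearMap ι ℝ ℝ ∘ₗ LinearMap.mulLeft ℝ B)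

@[simp] theorem Matrix.traceMulCLM_apply (B H : Matrix ι ι ℝ) :
    traceMulCLM B H = (B * H).trace := rfl

noncomputable def Matrix.detRowContinuousMultilinearMap :
    ContinuousMultilinearMap ℝ (fun _ : ι => ι → ℝ) ℝ :=
  ⟨(detRowAlternating : (ι → ℝ) [⋀^ι]→ₗ[ℝ] ℝ).toMultilinearMap, continuous_id.matrix_det⟩

theorem Matrix.det_updateRow_eq_adjugate_mulVec (A : Matrix ι ι ℝ) (i : ι) (v : ι → ℝ) :
    (A.updateRow i v).det = (A.adjugateᵀ *ᵥ v) i := by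
  rw [← det_transpose, ← updateCol_transpose, ← cramer_apply, cramer_eq_adjugate_mulVec,
    adjugate_transpose]

theorem Matrix.hasFDerivAt_det (A : Matrix ι ι ℝ) :
    HasFDerivAt det (traceMulCLM A.adjugate) A := by
  refine (detRowContinuousMultilinearMap.hasFDerivAt (fun i => A i)).congr_fderiv ?_
  ext H : 1
  rw [ContinuousMultilinearMap.linearDeriv_apply]
  show ∑ i, (A.updateRow i (H i)).det = trace (A.adjugate * of H)
  rw [trace_mul_comm]
  simp only [det_updateRow_eq_adjugate_mulVec, trace, diag, mul_apply, mulVec, dotProduct,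
    transpose_apply, of_apply, mul_comm]

theorem Matrix.hasFDerivAt_log_det {A : Matrix ι ι ℝ} (hA : A.det ≠ 0) :
    HasFDerivAt (fun B : Matrix ι ι ℝ => Real.log B.det) (traceMulCLM A⁻¹) A := by
  refine ((Real.hasDerivAt_log hA).comp_hasFDerivAt A (hasFDerivAt_det A)).congr_fderiv ?_
  ext H : 1
  show A.det⁻¹ * trace (A.adjugate * H) = trace (A⁻¹ * H)
  rw [inv_def, Ring.inverse_eq_inv', smul_mul_assoc, trace_smul, smul_eq_mul]

/- The sup norm on matrices is not submultiplicative, so `hasFDerivAt_ringInverse` is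
transported along the algebra isomorphism with operators on Euclidean space. -/
theorem Matrix.hasFDerivAt_inv {A : Matrix ι ι ℝ} (hA : IsUnit A.det) :
    HasFDerivAt (fun B : Matrix ι ι ℝ => B⁻¹)
      (-LinearMap.toContinuousLinearMap (LinearMap.mulLeftRight ℝ (A⁻¹, A⁻¹))) A := by
  let φ := (toEuclideanCLM (n := ι) (𝕜 := ℝ)).toRingEquiv
  let e : Matrix ι ι ℝ ≃L[ℝ] _ :=
    (toEuclideanCLM (n := ι) (𝕜 := ℝ)).toAlgEquiv.toLinearEquiv.toContinuousLinearEquiv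
  have he : ∀ B, e B = φ B := fun _ => rfl
  have hinv : (fun B : Matrix ι ι ℝ => B⁻¹) = e.symm ∘ Ring.inverse ∘ e := by
    funext B
    simp only [Function.comp_apply, he, ← φ.map_ringInverse, nonsing_inv_eq_ringInverse]
    exact (e.symm_apply_apply _).symm
  obtain ⟨u, hu⟩ : IsUnit (e A) := by rw [he]; exact (isUnit_iff_isUnit_det A).2 hA |>.map φ
  rw [hinv]
  refine (e.symm.hasFDerivAt.comp A
    ((hu ▸ hasFDerivAt_ringInverse (𝕜 := ℝ) u).comp A e.hasFDerivAt)).congr_fderiv ?_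
  ext H : 1
  have hu' : (↑u⁻¹ : EuclideanSpace ℝ ι →L[ℝ] EuclideanSpace ℝ ι) = e A⁻¹ := by
    rw [← Ring.inverse_unit, hu, he, he, nonsing_inv_eq_ringInverse, φ.map_ringInverse]
  show e.symm (-(↑u⁻¹ * e H * ↑u⁻¹)) = -(A⁻¹ * H * A⁻¹)
  rw [hu', he, he, ← map_mul, ← map_mul, ← map_neg, ← he]
  exact e.symm_apply_apply _

theorem Matrix.hasFDerivAt_dotProduct_inv_mulVec {X : Matrix ι ι ℝ} (hX : IsUnit X.det)
    (hsymm : X⁻¹.IsSymm) (μ : ι → ℝ) :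
    HasFDerivAt (fun Y : Matrix ι ι ℝ => μ ⬝ᵥ (Y⁻¹ *ᵥ μ))
      (-traceMulCLM (vecMulVec (X⁻¹ *ᵥ μ) (X⁻¹ *ᵥ μ))) X := by
  have hq : (fun Y : Matrix ι ι ℝ => μ ⬝ᵥ (Y⁻¹ *ᵥ μ)) =
      traceMulCLM (vecMulVec μ μ) ∘ fun Y => Y⁻¹ := funext fun Y => by
    rw [Function.comp_apply, traceMulCLM_apply, trace_vecMulVec_mul]
  rw [hq]
  refine ((traceMulCLM (vecMulVec μ μ)).hasFDerivAt.comp X (hasFDerivAt_inv hX)).congr_fderiv ?_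
  ext H : 1
  show trace (vecMulVec μ μ * -(X⁻¹ * H * X⁻¹)) = -trace (vecMulVec _ _ * H)
  rw [mul_neg, trace_neg, trace_vecMulVec_mul, trace_vecMulVec_mul]
  rw [← mulVec_mulVec, ← mulVec_mulVec, dotProduct_mulVec, ← mulVec_transpose, hsymm.eq]

end matrixCalculus

section gaussian
variable {ι : Type*} [Fintype ι]

noncomputable def Matrix.dotProductCLM : (ι → ℝ) →L[ℝ] (ι → ℝ) →L[ℝ] ℝ :=
  LinearMap.toContinuousLinearMap
    ((LinearMap.toContinuousLinearMap : ((ι → ℝ) →ₗ[ℝ] ℝ) ≃ₗ[ℝ] _).toLinearMap ∘ₗ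
      dotProductBilin ℝ ℝ)

@[simp] theorem Matrix.dotProductCLM_apply (v w : ι → ℝ) : dotProductCLM v w = v ⬝ᵥ w := rfl

variable {Ψ : Matrix ι ι ℝ}

theorem Matrix.IsSymm.hasFDerivAt_dotProduct_mulVec_self (hΨ : Ψ.IsSymm) (x : ι → ℝ) :
    HasFDerivAt (fun y => y ⬝ᵥ (Ψ *ᵥ y)) ((2 : ℝ) • dotProductCLM (Ψ *ᵥ x)) x := by
  refine (dotProductCLM.hasFDerivAt_of_bilinear (hasFDerivAt_id x)
    (LinearMap.toContinuousLinearMap (mulVecLin Ψ)).hasFDerivAt).congr_fderiv ?_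
  ext h : 1
  show x ⬝ᵥ (Ψ *ᵥ h) + h ⬝ᵥ (Ψ *ᵥ x) = 2 * ((Ψ *ᵥ x) ⬝ᵥ h)
  rw [dotProduct_comm h, hΨ.mulVec_dotProduct]
  ring

theorem Matrix.IsSymm.hasFDerivAt_exp_quadForm_div (hΨ : Ψ.IsSymm) (c : ℝ) (x : ι → ℝ) :
    HasFDerivAt (fun y => Real.exp (-(1 / 2 : ℝ) * (y ⬝ᵥ (Ψ *ᵥ y))) / c)
      (-(Real.exp (-(1 / 2 : ℝ) * (x ⬝ᵥ (Ψ *ᵥ x))) / c) • dotProductCLM (Ψ *ᵥ x)) x := by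
  simp only [fun a : ℝ => div_eq_mul_inv a c]
  refine (((Real.hasDerivAt_exp _).comp_hasFDerivAt x
    ((hΨ.hasFDerivAt_dotProduct_mulVec_self x).const_mul _)).mul_const c⁻¹).congr_fderiv ?_
  ext h : 1
  show c⁻¹ * (Real.exp _ * (-(1 / 2 : ℝ) * (2 * ((Ψ *ᵥ x) ⬝ᵥ h)))) =
    -(Real.exp _ * c⁻¹) * ((Ψ *ᵥ x) ⬝ᵥ h)
  ring

theorem Matrix.IsSymm.fderiv_fderiv_exp_quadForm_div (hΨ : Ψ.IsSymm) (c : ℝ) (μ h₁ h₂ : ι → ℝ) :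
    fderiv ℝ (fun m => fderiv ℝ (fun y => Real.exp (-(1 / 2 : ℝ) * (y ⬝ᵥ (Ψ *ᵥ y))) / c) m h₂)
        μ h₁ =
      Real.exp (-(1 / 2 : ℝ) * (μ ⬝ᵥ (Ψ *ᵥ μ))) / c *
        (h₁ ⬝ᵥ ((vecMulVec (Ψ *ᵥ μ) (Ψ *ᵥ μ) - Ψ) *ᵥ h₂)) := by
  set G := fun y => Real.exp (-(1 / 2 : ℝ) * (y ⬝ᵥ (Ψ *ᵥ y))) / c
  have hsymm : ∀ x y, (Ψ *ᵥ x) ⬝ᵥ y = (Ψ *ᵥ y) ⬝ᵥ x := fun x y => by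
    rw [hΨ.mulVec_dotProduct, dotProduct_comm]
  have hG : (fun m => fderiv ℝ G m h₂) = fun m => -G m * dotProductCLM (Ψ *ᵥ h₂) m := by
    funext m
    rw [(hΨ.hasFDerivAt_exp_quadForm_div c m).fderiv]
    show -G m * ((Ψ *ᵥ m) ⬝ᵥ h₂) = _
    rw [dotProductCLM_apply, hsymm]
  have hG' : HasFDerivAt (fun m => -G m * dotProductCLM (Ψ *ᵥ h₂) m) _ μ :=
    (hΨ.hasFDerivAt_exp_quadForm_div c μ).neg.mul (dotProductCLM (Ψ *ᵥ h₂)).hasFDerivAt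
  have hK : h₁ ⬝ᵥ ((vecMulVec (Ψ *ᵥ μ) (Ψ *ᵥ μ) - Ψ) *ᵥ h₂) =
      ((Ψ *ᵥ μ) ⬝ᵥ h₁) * ((Ψ *ᵥ μ) ⬝ᵥ h₂) - (Ψ *ᵥ h₁) ⬝ᵥ h₂ := by
    rw [sub_mulVec, vecMulVec_mulVec, op_smul_eq_smul, dotProduct_sub, dotProduct_smul,
      smul_eq_mul, dotProduct_comm h₁, dotProduct_comm h₁, hsymm h₂]
    ring
  rw [hG, hG'.fderiv]
  show -G μ * ((Ψ *ᵥ h₂) ⬝ᵥ h₁) + ((Ψ *ᵥ h₂) ⬝ᵥ μ) * -(-G μ * ((Ψ *ᵥ μ) ⬝ᵥ h₁)) = G μ * _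
  rw [hK, hsymm h₂ h₁, hsymm h₂ μ]
  ring

end gaussian

theorem Matrix.IsSymm.hessianMatrix_exp_quadForm_div {n : ℕ} {Ψ : Matrix (Fin n) (Fin n) ℝ}
    (hΨ : Ψ.IsSymm) (c : ℝ) (μ : Fin n → ℝ) :
    hessianMatrix (fun y => Real.exp (-(1 / 2 : ℝ) * (y ⬝ᵥ (Ψ *ᵥ y))) / c) μ =
      (Real.exp (-(1 / 2 : ℝ) * (μ ⬝ᵥ (Ψ *ᵥ μ))) / c) • (vecMulVec (Ψ *ᵥ μ) (Ψ *ᵥ μ) - Ψ) := by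
  ext i j
  rw [hessianMatrix, of_apply, hΨ.fderiv_fderiv_exp_quadForm_div, mulVec_single_one,
    single_one_dotProduct]
  rfl

section gQE
variable {n : ℕ} {P : Matrix (Fin n) (Fin n) ℝ}

theorem gQE_eq_exp (μ : Fin n → ℝ) {A : Matrix (Fin n) (Fin n) ℝ} (hP : 0 < P.det)
    (hA : 0 < (P⁻¹ + A).det) :
    gQE P μ A = Real.exp (-(1 / 2 : ℝ) *
      (μ ⬝ᵥ ((P⁻¹ + A)⁻¹ *ᵥ μ) + Real.log (P⁻¹ + A).det + Real.log P.det)) := by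
  have hfac : 1 + A * P = (P⁻¹ + A) * P := by
    rw [add_mul, nonsing_inv_mul P hP.ne'.isUnit]
  rw [gQE, hfac, det_mul, Real.sqrt_eq_rpow, Real.rpow_def_of_pos (mul_pos hA hP), ← Real.exp_sub,
    Real.log_mul hA.ne' hP.ne']
  ring_nf

theorem hasFDerivAt_gQE (μ : Fin n → ℝ) {S : Matrix (Fin n) (Fin n) ℝ} (hP : 0 < P.det)
    (hX : (P⁻¹ + S).PosDef) :
    HasFDerivAt (fun A => gQE P μ A)
      ((1 / 2 * gQE P μ S) •
        traceMulCLM (vecMulVec ((P⁻¹ + S)⁻¹ *ᵥ μ) ((P⁻¹ + S)⁻¹ *ᵥ μ) - (P⁻¹ + S)⁻¹)) S := by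
  have htrans : HasFDerivAt (fun A : Matrix (Fin n) (Fin n) ℝ => P⁻¹ + A) (.id ℝ _) S :=
    (hasFDerivAt_id S).const_add P⁻¹
  have hexp : HasFDerivAt (fun A => Real.exp (-(1 / 2 : ℝ) *
      (μ ⬝ᵥ ((P⁻¹ + A)⁻¹ *ᵥ μ) + Real.log (P⁻¹ + A).det + Real.log P.det))) _ S :=
    (Real.hasDerivAt_exp _).comp_hasFDerivAt S
      ((((hasFDerivAt_dotProduct_inv_mulVec hX.det_pos.ne'.isUnit hX.inv.isSymm μ).comp S
        htrans).add ((hasFDerivAt_log_det hX.det_pos.ne').comp S htrans)).add_const _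
        |>.const_mul _)
  have hev : ∀ᶠ A in 𝓝 S, gQE P μ A = Real.exp (-(1 / 2 : ℝ) *
      (μ ⬝ᵥ ((P⁻¹ + A)⁻¹ *ᵥ μ) + Real.log (P⁻¹ + A).det + Real.log P.det)) :=
    ((continuous_const.add continuous_id).matrix_det.tendsto S).eventually_const_lt hX.det_pos
      |>.mono fun A hA => gQE_eq_exp μ hP hA
  refine (hexp.congr_of_eventuallyEq hev).congr_fderiv ?_
  ext H : 1
  rw [hev.self_of_nhds]
  show Real.exp _ * (-(1 / 2) * (-trace (vecMulVec _ _ * H) + trace (_ * H))) =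
    1 / 2 * Real.exp _ * trace ((vecMulVec _ _ - _) * H)
  rw [sub_mul, trace_sub]
  ring

end gQE

/-- Verification of the quantum Price relation for the quadratic-exponential moment:
`∂_μ² g = g (Ψμμᵀ Ψ - Ψ)`, `D_Σ g [H] = (1/2) g ⟨Ψμμᵀ Ψ - Ψ, H⟩`, hence
`∂_μ² g = 2 ∂_Σ g`. -/
theorem quadratic_exponential_price_relation {n : ℕ} (μ : Fin n → ℝ)
    (S P : Matrix (Fin n) (Fin n) ℝ) (hS : S.PosDef) (hP : P.PosDef) :
    (∀ h₁ h₂ : Fin n → ℝ,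
      fderiv ℝ (fun m => fderiv ℝ (fun m' => gQE P m' S) m h₂) μ h₁ =
        gQE P μ S *
          (h₁ ⬝ᵥ ((Matrix.vecMulVec ((P⁻¹ + S)⁻¹ *ᵥ μ) ((P⁻¹ + S)⁻¹ *ᵥ μ) -
            (P⁻¹ + S)⁻¹) *ᵥ h₂))) ∧
    ∃ L : symMatrices n →L[ℝ] ℝ,
      HasFDerivAt (fun A : symMatrices n => gQE P μ (A : Matrix (Fin n) (Fin n) ℝ))
        L ⟨S, hS.mem_symMatrices⟩ ∧
      (∀ H : symMatrices n,
        L H = (1 / 2 : ℝ) * gQE P μ S *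
          Matrix.trace ((Matrix.vecMulVec ((P⁻¹ + S)⁻¹ *ᵥ μ) ((P⁻¹ + S)⁻¹ *ᵥ μ) -
            (P⁻¹ + S)⁻¹) * (H : Matrix (Fin n) (Fin n) ℝ))) ∧
      (∀ H : symMatrices n,
        ∑ i : Fin n, ∑ j : Fin n, (H : Matrix (Fin n) (Fin n) ℝ) i j *
            hessianMatrix (fun m => gQE P m S) μ i j = 2 * L H) := by
  have hX : (P⁻¹ + S).PosDef := hP.inv.add hS
  have hΨ : (P⁻¹ + S)⁻¹.IsSymm := hX.inv.isSymm
  have hL := (hasFDerivAt_gQE μ hP.det_pos hX).comp (⟨S, hS.mem_symMatrices⟩ : symMatrices n)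
    (symMatrices n).subtypeL.hasFDerivAt
  refine ⟨hΨ.fderiv_fderiv_exp_quadForm_div _ μ, _, hL, fun H => rfl, fun H => ?_⟩
  have hHess : hessianMatrix (fun m => gQE P m S) μ = gQE P μ S •
      (vecMulVec ((P⁻¹ + S)⁻¹ *ᵥ μ) ((P⁻¹ + S)⁻¹ *ᵥ μ) - (P⁻¹ + S)⁻¹) :=
    hΨ.hessianMatrix_exp_quadForm_div _ μ
  show _ = 2 * (1 / 2 * gQE P μ S * trace (_ * (H : Matrix (Fin n) (Fin n) ℝ)))
  simp only [hHess, H.2.trace_mul_eq_sum, Matrix.smul_apply, smul_eq_mul, Finset.mul_sum]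
  exact Finset.sum_congr rfl fun i _ => Finset.sum_congr rfl fun j _ => by ring
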